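/- Unified convergence theorem (deterministic form): under the hypotheses that r_{k+1} ≤ (1−γμ)r_k + Bγ²s_k + D₁γ² − 2γ(1−Aγ)F_k and s_{k+1} ≤ (1−ρ)s_k + 2C F_k + D₂ with all quantities nonnegative, F_k ≥ 0, 0 < ρ ≤ 1, μ > 0, M > B/ρ, and 0 < γ ≤ min(1/μ, 1/(A + CM)), the sequence V_k = r_k + Mγ²s_k satisfies V_k ≤ (1 − min(γμ, ρ − B/M))^k V_0 + (D₁ + MD₂)γ² / min(γμ, ρ − B/M) for all k ≥ 1. -/

import Mathlib

/-!
The Lyapunov function `V k = r k + M γ² s k` contracts by the factor `1 - δ`,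
`δ = min (γ μ) (ρ - B / M)`, up to the additive noise `(D₁ + M D₂) γ²`: the `s`-term that
`r` picks up is absorbed by the contraction of `s` because `M > B / ρ`, and the `F`-terms combine
into a nonpositive one because `γ ≤ 1 / (A + C M)`. Unrolling the affine recursion
`V (k + 1) ≤ (1 - δ) V k + c` gives `V k ≤ (1 - δ) ^ k V 0 + c / δ`.
-/

theorem le_one_sub_pow_mul_add_div {V : ℕ → ℝ} {δ c : ℝ} (hδ0 : 0 < δ) (hδ1 : δ ≤ 1)
    (hc : 0 ≤ c) (h : ∀ n, V (n + 1) ≤ (1 - δ) * V n + c) (n : ℕ) :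
    V n ≤ (1 - δ) ^ n * V 0 + c / δ := by
  -- `c / δ` is the fixed point of `x ↦ (1 - δ) x + c`, so `V n - c / δ` decays geometrically.
  have hgeom : V n - c / δ ≤ (1 - δ) ^ n * (V 0 - c / δ) := by
    refine le_geom (u := fun n ↦ V n - c / δ) (sub_nonneg.2 hδ1) n fun k _ ↦ ?_
    have hfix : (1 - δ) * (c / δ) + c = c / δ := by field_simp; ring
    linarith [h k]
  have hpow : 0 ≤ (1 - δ) ^ n * (c / δ) := by
    have : 0 ≤ 1 - δ := sub_nonneg.2 hδ1
    positivity
  linarith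

theorem mul_le_one_of_le_one_div {x a : ℝ} (hx : 0 < x) (h : x ≤ 1 / a) : x * a ≤ 1 := by
  have ha : 0 < a := by
    by_contra! ha
    linarith [one_div_nonpos.2 ha]
  exact (le_div_iff₀ ha).1 h

theorem lyapunov_step {r s F r' s' γ μ A B C ρ M D₁ D₂ δ : ℝ}
    (hr : 0 ≤ r) (hs : 0 ≤ s) (hF : 0 ≤ F) (hM : 0 ≤ M) (hγ : 0 ≤ γ)
    (hδμ : δ ≤ γ * μ) (hδρ : M * δ ≤ M * ρ - B) (hγACM : γ * (A + C * M) ≤ 1)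
    (hr' : r' ≤ (1 - γ * μ) * r + B * γ ^ 2 * s + D₁ * γ ^ 2 - 2 * γ * (1 - A * γ) * F)
    (hs' : s' ≤ (1 - ρ) * s + 2 * C * F + D₂) :
    r' + M * γ ^ 2 * s' ≤ (1 - δ) * (r + M * γ ^ 2 * s) + (D₁ + M * D₂) * γ ^ 2 := by
  have hMs' : M * γ ^ 2 * s' ≤ M * γ ^ 2 * ((1 - ρ) * s + 2 * C * F + D₂) :=
    mul_le_mul_of_nonneg_left hs' (by positivity)
  have hrate_r : (1 - γ * μ) * r ≤ (1 - δ) * r := mul_le_mul_of_nonneg_right (by linarith) hr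
  have hrate_s : (B + M * (1 - ρ)) * (γ ^ 2 * s) ≤ M * (1 - δ) * (γ ^ 2 * s) :=
    mul_le_mul_of_nonneg_right (by linarith) (by positivity)
  have hF_cancel : 0 ≤ 2 * γ * (1 - γ * (A + C * M)) * F :=
    mul_nonneg (mul_nonneg (by positivity) (sub_nonneg.2 hγACM)) hF
  linarith

theorem unified_convergence_general (r s F : ℕ → ℝ) (γ μ A B C ρ M D₁ D₂ : ℝ)
    (hr : ∀ k, 0 ≤ r k) (hs : ∀ k, 0 ≤ s k) (hF : ∀ k, 0 ≤ F k)
    (hμ : 0 < μ) (hB : 0 ≤ B)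
    (hρ0 : 0 < ρ) (hD₁ : 0 ≤ D₁) (hD₂ : 0 ≤ D₂)
    (hM : M > B / ρ) (hγ0 : 0 < γ) (hγle : γ ≤ min (1 / μ) (1 / (A + C * M)))
    (hrec1 : ∀ k, r (k + 1) ≤ (1 - γ * μ) * r k + B * γ ^ 2 * s k + D₁ * γ ^ 2
      - 2 * γ * (1 - A * γ) * F k)
    (hrec2 : ∀ k, s (k + 1) ≤ (1 - ρ) * s k + 2 * C * F k + D₂) :
    ∀ k ≥ 1, r k + M * γ ^ 2 * s k ≤
      (1 - min (γ * μ) (ρ - B / M)) ^ k * (r 0 + M * γ ^ 2 * s 0) +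
        (D₁ + M * D₂) * γ ^ 2 / min (γ * μ) (ρ - B / M) := by
  intro k _
  set δ := min (γ * μ) (ρ - B / M)
  have hM0 : 0 < M := (div_nonneg hB hρ0.le).trans_lt hM
  have hBρ : B < M * ρ := (div_lt_iff₀ hρ0).1 hM
  have hγμ : γ * μ ≤ 1 := mul_le_one_of_le_one_div hγ0 (hγle.trans (min_le_left _ _))
  have hγACM : γ * (A + C * M) ≤ 1 := mul_le_one_of_le_one_div hγ0 (hγle.trans (min_le_right _ _))
  have hδ0 : 0 < δ := lt_min (by positivity) (sub_pos.2 ((div_lt_iff₀' hM0).2 hBρ))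
  have hδρ : M * δ ≤ M * ρ - B := by
    calc M * δ ≤ M * (ρ - B / M) := mul_le_mul_of_nonneg_left (min_le_right _ _) hM0.le
      _ = M * ρ - B := by field_simp
  refine le_one_sub_pow_mul_add_div (V := fun n ↦ r n + M * γ ^ 2 * s n) hδ0
    ((min_le_left _ _).trans hγμ) (by positivity) (fun n ↦ ?_) k
  exact lyapunov_step (hr n) (hs n) (hF n) hM0.le hγ0.le (min_le_left _ _) hδρ hγACM
    (hrec1 n) (hrec2 n)

theorem unified_convergence (r s F : ℕ → ℝ) (γ μ A B C ρ M D₁ D₂ : ℝ)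
    (hr : ∀ k, 0 ≤ r k) (hs : ∀ k, 0 ≤ s k) (hF : ∀ k, 0 ≤ F k)
    (hμ : 0 < μ) (hA : 0 ≤ A) (hB : 0 ≤ B) (hC : 0 ≤ C)
    (hρ0 : 0 < ρ) (hρ1 : ρ ≤ 1) (hM0 : 0 ≤ M) (hD₁ : 0 ≤ D₁) (hD₂ : 0 ≤ D₂)
    (hM : M > B / ρ) (hγ0 : 0 < γ) (hγle : γ ≤ min (1 / μ) (1 / (A + C * M)))
    (hrec1 : ∀ k, r (k + 1) ≤ (1 - γ * μ) * r k + B * γ ^ 2 * s k + D₁ * γ ^ 2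
      - 2 * γ * (1 - A * γ) * F k)
    (hrec2 : ∀ k, s (k + 1) ≤ (1 - ρ) * s k + 2 * C * F k + D₂) :
    ∀ k ≥ 1, r k + M * γ ^ 2 * s k ≤
      (1 - min (γ * μ) (ρ - B / M)) ^ k * (r 0 + M * γ ^ 2 * s 0) +
        (D₁ + M * D₂) * γ ^ 2 / min (γ * μ) (ρ - B / M) :=
  unified_convergence_general r s F γ μ A B C ρ M D₁ D₂ hr hs hF hμ hB hρ0 hD₁ hD₂ hM hγ0 hγle hrec1
    hrec2
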